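/- arXiv:2306.05991 — 2 statements merged into one kernel-verified Lean document; each statement's English description precedes it below -/
import Mathlib

section
/- Let (Z, d) be a finite metric space, A a finite nonempty set, and γ ∈ [0, 1). Suppose r̃ : Z × A → ℝ satisfies |r̃(z, a) − r̃(z', a)| ≤ L_r d(z, z') for all z, z' ∈ Z, a ∈ A, and P̃ : Z × A → Δ(Z) satisfies W_1(P̃(· | z, a), P̃(· | z', a)) ≤ L_P d(z, z') for all z, z' ∈ Z, a ∈ A, where W_1 is the Wasserstein-1 distance on Δ(Z) induced by d. If γ L_P < 1, then the value function V*(z) = max_{a∈A} Q*(z, a) of the unique fixed point Q* of Q*(z, a) = r̃(z, a) + γ Σ_{z'∈Z} P̃(z' | z, a) max_{a'∈A} Q*(z', a') is Lipschitz with Lip(V*) ≤ L_r / (1 − γ L_P). -/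
open scoped BigOperators

/-- A probability vector on a finite type. -/
def IsProbVec {X : Type*} [Fintype X] (p : X → ℝ) : Prop :=
  (∀ x, 0 ≤ p x) ∧ ∑ x, p x = 1

/-- The maximum of a real-valued function on a finite nonempty type. -/
noncomputable def maxA {A : Type*} [Fintype A] [Nonempty A] (q : A → ℝ) : ℝ :=
  Finset.univ.sup' Finset.univ_nonempty q

/-- Wasserstein-1 distance between two distributions on a finite metric space,
defined through Kantorovich–Rubinstein duality:
`W₁(μ, ν) = sup {|∑_z g(z) μ(z) - ∑_z g(z) ν(z)| : g 1-Lipschitz}`. -/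
noncomputable def wass1 {Z : Type*} [Fintype Z] [MetricSpace Z] (μ ν : Z → ℝ) : ℝ :=
  sSup {x : ℝ | ∃ g : Z → ℝ, (∀ z z' : Z, |g z - g z'| ≤ dist z z') ∧
    x = |∑ z : Z, g z * μ z - ∑ z : Z, g z * ν z|}

lemma aux_sum_centered {Z : Type*} [Fintype Z] (g : Z → ℝ) (p : Z → ℝ)
    (hp : IsProbVec p) (z0 : Z) :
    ∑ z, g z * p z - g z0 = ∑ z, (g z - g z0) * p z := by
  have h : ∑ z, (g z - g z0) * p z = (∑ z, g z * p z) - g z0 * ∑ z, p z := by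
    rw [Finset.mul_sum, ← Finset.sum_sub_distrib]
    exact Finset.sum_congr rfl (fun z _ => by ring)
  rw [h, hp.2, mul_one]

lemma aux_centered_bound {Z : Type*} [Fintype Z] [MetricSpace Z] [Nonempty Z]
    (g : Z → ℝ) (hg : ∀ z z' : Z, |g z - g z'| ≤ dist z z')
    (p : Z → ℝ) (hp : IsProbVec p) (z0 : Z) :
    |∑ z, g z * p z - g z0| ≤ Finset.univ.sup' Finset.univ_nonempty (fun z => dist z z0) := by
  set D := Finset.univ.sup' Finset.univ_nonempty (fun z : Z => dist z z0) with hD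
  rw [aux_sum_centered g p hp z0]
  calc |∑ z, (g z - g z0) * p z| ≤ ∑ z, |(g z - g z0) * p z| := Finset.abs_sum_le_sum_abs _ _
    _ ≤ ∑ z, D * p z := by
        refine Finset.sum_le_sum (fun z _ => ?_)
        rw [abs_mul, abs_of_nonneg (hp.1 z)]
        refine mul_le_mul_of_nonneg_right ((hg z z0).trans ?_) (hp.1 z)
        exact Finset.le_sup' (fun z : Z => dist z z0) (Finset.mem_univ z)
    _ = D := by rw [← Finset.mul_sum, hp.2, mul_one]

lemma wass1_bddAbove {Z : Type*} [Fintype Z] [MetricSpace Z] [Nonempty Z]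
    {μ ν : Z → ℝ} (hμ : IsProbVec μ) (hν : IsProbVec ν) :
    BddAbove {x : ℝ | ∃ g : Z → ℝ, (∀ z z' : Z, |g z - g z'| ≤ dist z z') ∧
      x = |∑ z : Z, g z * μ z - ∑ z : Z, g z * ν z|} := by
  obtain ⟨z0⟩ := ‹Nonempty Z›
  set D := Finset.univ.sup' Finset.univ_nonempty (fun z : Z => dist z z0) with hD
  refine ⟨D + D, ?_⟩
  rintro x ⟨g, hg, rfl⟩
  have h1 := aux_centered_bound g hg μ hμ z0
  have h2 := aux_centered_bound g hg ν hν z0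
  calc |∑ z, g z * μ z - ∑ z, g z * ν z|
      = |(∑ z, g z * μ z - g z0) - (∑ z, g z * ν z - g z0)| := by congr 1; ring
    _ ≤ |∑ z, g z * μ z - g z0| + |∑ z, g z * ν z - g z0| := abs_sub _ _
    _ ≤ D + D := add_le_add h1 h2

/-- Kantorovich duality upper bound: an `L`-Lipschitz test function. -/
lemma sum_lip_le_wass1 {Z : Type*} [Fintype Z] [MetricSpace Z] [Nonempty Z]
    {μ ν : Z → ℝ} (hμ : IsProbVec μ) (hν : IsProbVec ν)
    {L : ℝ} (hL : 0 ≤ L) {g : Z → ℝ}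
    (hg : ∀ z z' : Z, |g z - g z'| ≤ L * dist z z') :
    |∑ z, g z * μ z - ∑ z, g z * ν z| ≤ L * wass1 μ ν := by
  rcases eq_or_lt_of_le hL with h0 | h0
  · -- L = 0 : g is constant
    obtain ⟨z0⟩ := ‹Nonempty Z›
    have hconst : ∀ z, g z = g z0 := by
      intro z
      have := hg z z0
      rw [← h0, zero_mul] at this
      have := abs_nonpos_iff.mp (le_antisymm this (abs_nonneg _)).le
      linarith [sub_eq_zero.mp this]
    have : ∑ z, g z * μ z = ∑ z, g z * ν z := by
      simp only [fun z => hconst z]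
      rw [← Finset.mul_sum, ← Finset.mul_sum, hμ.2, hν.2]
    rw [this]
    simp [← h0]
  · -- L > 0 : rescale
    have hg' : ∀ z z' : Z, |g z / L - g z' / L| ≤ dist z z' := by
      intro z z'
      rw [div_sub_div_same, abs_div, abs_of_pos h0, div_le_iff₀ h0, mul_comm]
      exact hg z z'
    have hmem : |∑ z, (g z / L) * μ z - ∑ z, (g z / L) * ν z| ∈
        {x : ℝ | ∃ g : Z → ℝ, (∀ z z' : Z, |g z - g z'| ≤ dist z z') ∧
          x = |∑ z : Z, g z * μ z - ∑ z : Z, g z * ν z|} :=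
      ⟨fun z => g z / L, hg', rfl⟩
    have hle := le_csSup (wass1_bddAbove hμ hν) hmem
    have e1 : ∑ z, (g z / L) * μ z = (∑ z, g z * μ z) / L := by
      rw [Finset.sum_div]; exact Finset.sum_congr rfl (fun z _ => by ring)
    have e2 : ∑ z, (g z / L) * ν z = (∑ z, g z * ν z) / L := by
      rw [Finset.sum_div]; exact Finset.sum_congr rfl (fun z _ => by ring)
    have heq : |∑ z, (g z / L) * μ z - ∑ z, (g z / L) * ν z|
        = |∑ z, g z * μ z - ∑ z, g z * ν z| / L := by
      rw [e1, e2, ← sub_div, abs_div, abs_of_pos h0]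
    rw [heq, div_le_iff₀ h0, mul_comm] at hle
    exact hle

lemma abs_maxA_sub_maxA {A : Type*} [Fintype A] [Nonempty A] (f g : A → ℝ) {c : ℝ}
    (h : ∀ a, |f a - g a| ≤ c) : |maxA f - maxA g| ≤ c := by
  rw [abs_sub_le_iff]
  constructor
  · rw [sub_le_iff_le_add, maxA]
    refine Finset.sup'_le _ _ (fun a _ => ?_)
    have h1 := (abs_le.mp (h a)).2
    have h2 : g a ≤ maxA g := Finset.le_sup' g (Finset.mem_univ a)
    unfold maxA at h2 ⊢
    linarith
  · rw [sub_le_iff_le_add, maxA]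
    refine Finset.sup'_le _ _ (fun a _ => ?_)
    have h1 := (abs_le.mp (h a)).1
    have h2 : f a ≤ maxA f := Finset.le_sup' f (Finset.mem_univ a)
    unfold maxA at h2 ⊢
    linarith

/-- **Instance-independent bound for the Wasserstein function class.**
If `r̃` is `L_r`-Lipschitz in `z`, `P̃` is `L_P`-Lipschitz in `z` w.r.t. `W₁`, and
`γ L_P < 1`, then the value function `V^*(z) = max_a Q^*(z, a)` of the unique fixed
point `Q^*` of the Bellman equation is Lipschitz with
`Lip(V^*) ≤ L_r / (1 - γ L_P)`. -/
theorem lipschitz_bound_Wasserstein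
    {Z A : Type*} [Fintype Z] [MetricSpace Z] [Fintype A] [Nonempty Z] [Nonempty A]
    (γ : ℝ) (hγ0 : 0 ≤ γ) (hγ1 : γ < 1)
    (Lr LP : ℝ)
    (rtil : Z → A → ℝ)
    (hr : ∀ (z z' : Z) (a : A), |rtil z a - rtil z' a| ≤ Lr * dist z z')
    (Ptil : Z → A → Z → ℝ) (hPtil : ∀ z a, IsProbVec (Ptil z a))
    (hP : ∀ (z z' : Z) (a : A), wass1 (Ptil z a) (Ptil z' a) ≤ LP * dist z z')
    (hγLP : γ * LP < 1)
    (Q : Z → A → ℝ)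
    (hQ : ∀ z a, Q z a =
      rtil z a + γ * ∑ z' : Z, Ptil z a z' * maxA (fun a' => Q z' a')) :
    ∀ z z' : Z,
      |maxA (fun a => Q z a) - maxA (fun a => Q z' a)| ≤
        Lr / (1 - γ * LP) * dist z z' := by
  classical
  intro z z'
  set V : Z → ℝ := fun z => maxA (fun a => Q z a) with hV
  by_cases hzz : z = z'
  · subst hzz; simp
  · have hd : 0 < dist z z' := dist_pos.mpr hzz
    have hden : 0 < 1 - γ * LP := by linarith
    -- finite set of distinct pairs
    set s : Finset (Z × Z) := Finset.univ.filter (fun p : Z × Z => p.1 ≠ p.2) with hs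
    have hmem : (z, z') ∈ s := by simp [hs, hzz]
    have hsne : s.Nonempty := ⟨(z, z'), hmem⟩
    set L : ℝ := s.sup' hsne (fun p => |V p.1 - V p.2| / dist p.1 p.2) with hL
    have hL0 : 0 ≤ L := by
      refine le_trans ?_ (Finset.le_sup' (fun p : Z × Z => |V p.1 - V p.2| / dist p.1 p.2) hmem)
      positivity
    -- V is L-Lipschitz
    have hVlip : ∀ u u' : Z, |V u - V u'| ≤ L * dist u u' := by
      intro u u'
      by_cases huu : u = u'
      · subst huu; simp
      · have hdu : 0 < dist u u' := dist_pos.mpr huu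
        have hmemu : (u, u') ∈ s := by simp [hs, huu]
        have := Finset.le_sup' (fun p : Z × Z => |V p.1 - V p.2| / dist p.1 p.2) hmemu
        rw [← hL] at this
        calc |V u - V u'| = |V u - V u'| / dist u u' * dist u u' := by
              field_simp
          _ ≤ L * dist u u' := mul_le_mul_of_nonneg_right this hdu.le
    -- the contraction-type bound
    have hLr0 : 0 ≤ Lr := by
      have := hr z z' (Classical.arbitrary A)
      nlinarith [abs_nonneg (rtil z (Classical.arbitrary A) - rtil z' (Classical.arbitrary A))]
    have hkey : ∀ u u' : Z, |V u - V u'| ≤ (Lr + γ * LP * L) * dist u u' := by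
      intro u u'
      refine abs_maxA_sub_maxA _ _ (fun a => ?_)
      have hsum : |∑ w, V w * Ptil u a w - ∑ w, V w * Ptil u' a w|
          ≤ L * wass1 (Ptil u a) (Ptil u' a) :=
        sum_lip_le_wass1 (hPtil u a) (hPtil u' a) hL0 hVlip
      have hw : L * wass1 (Ptil u a) (Ptil u' a) ≤ L * (LP * dist u u') :=
        mul_le_mul_of_nonneg_left (hP u u' a) hL0
      have hQd : Q u a - Q u' a =
          (rtil u a - rtil u' a) +
          γ * (∑ w, V w * Ptil u a w - ∑ w, V w * Ptil u' a w) := by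
        rw [hQ u a, hQ u' a]
        have e1 : ∀ v : Z, ∑ w, Ptil v a w * maxA (fun a' => Q w a')
            = ∑ w, V w * Ptil v a w := by
          intro v; exact Finset.sum_congr rfl (fun w _ => by rw [hV]; ring)
        rw [e1 u, e1 u']
        ring
      calc |Q u a - Q u' a|
          ≤ |rtil u a - rtil u' a|
            + γ * |∑ w, V w * Ptil u a w - ∑ w, V w * Ptil u' a w| := by
            rw [hQd]
            refine (abs_add_le _ _).trans (by rw [abs_mul, abs_of_nonneg hγ0])
        _ ≤ Lr * dist u u' + γ * (L * (LP * dist u u')) := by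
            refine add_le_add (hr u u' a) (mul_le_mul_of_nonneg_left (hsum.trans hw) hγ0)
        _ = (Lr + γ * LP * L) * dist u u' := by ring
    -- L satisfies the fixed-point inequality
    have hLle : L ≤ Lr + γ * LP * L := by
      rw [hL]
      refine Finset.sup'_le _ _ (fun p hp => ?_)
      have hpne : p.1 ≠ p.2 := by
        have := Finset.mem_filter.mp hp; exact this.2
      have hdp : 0 < dist p.1 p.2 := dist_pos.mpr hpne
      rw [div_le_iff₀ hdp]
      exact hkey p.1 p.2
    have hLfin : L ≤ Lr / (1 - γ * LP) := by
      rw [le_div_iff₀ hden]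
      nlinarith
    calc |V z - V z'| ≤ L * dist z z' := hVlip z z'
      _ ≤ Lr / (1 - γ * LP) * dist z z' := mul_le_mul_of_nonneg_right hLfin hd.le
end

section
/- Let X be a finite nonempty set, γ ∈ [0, 1), C > 0 with γ(1 + 1/C) < 1, and ε > 0. Let W¹, W², F : X → ℝ and α : X → [0, 1] satisfy ‖W¹‖_∞ > Cε, ‖W²‖_∞ < ε, and |F(x)| ≤ γ(‖W¹‖_∞ + ‖W²‖_∞) for all x ∈ X. Then |F(x)| < ‖W¹‖_∞ for every x ∈ X, and the update W'(x) = (1 − α(x)) W¹(x) + α(x) F(x) satisfies ‖W'‖_∞ ≤ ‖W¹‖_∞, with |W'(x)| < ‖W¹‖_∞ for every x with α(x) > 0. -/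
open scoped BigOperators

/-- Supremum norm `‖g‖_∞ = max_x |g x|` of a function on a finite nonempty type. -/
noncomputable def supNorm {X : Type*} [Fintype X] [Nonempty X] (g : X → ℝ) : ℝ :=
  Finset.univ.sup' Finset.univ_nonempty (fun x => |g x|)

lemma abs_le_supNorm {X : Type*} [Fintype X] [Nonempty X] (g : X → ℝ) (x : X) :
    |g x| ≤ supNorm g :=
  Finset.le_sup' (fun x => |g x|) (Finset.mem_univ x)

/-- **Monotone-decrease lemma.**  If `‖W¹‖_∞ > Cε`, `‖W²‖_∞ < ε`, the increments
satisfy `|F(x)| ≤ γ(‖W¹‖_∞ + ‖W²‖_∞)`, `γ(1 + 1/C) < 1`, and the stepsizes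
`α(x) ∈ [0, 1]`, then `|F(x)| < ‖W¹‖_∞` for every `x`, and the update
`W'(x) = (1 - α(x)) W¹(x) + α(x) F(x)` satisfies `‖W'‖_∞ ≤ ‖W¹‖_∞`, with
`|W'(x)| < ‖W¹‖_∞` for every `x` with `α(x) > 0`. -/
theorem above_threshold_decreases
    {X : Type*} [Fintype X] [Nonempty X]
    (γ C ε : ℝ) (hγ0 : 0 ≤ γ) (hγ1 : γ < 1)
    (hC : 0 < C) (hγC : γ * (1 + 1 / C) < 1) (hε : 0 < ε)
    (W1 W2 F : X → ℝ) (α : X → ℝ)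
    (hα : ∀ x, α x ∈ Set.Icc (0 : ℝ) 1)
    (hW1 : C * ε < supNorm W1)
    (hW2 : supNorm W2 < ε)
    (hF : ∀ x, |F x| ≤ γ * (supNorm W1 + supNorm W2)) :
    (∀ x, |F x| < supNorm W1) ∧
    supNorm (fun x => (1 - α x) * W1 x + α x * F x) ≤ supNorm W1 ∧
    ∀ x, 0 < α x → |(1 - α x) * W1 x + α x * F x| < supNorm W1 := by
  set N1 := supNorm W1 with hN1
  set N2 := supNorm W2 with hN2
  have hN1pos : 0 < N1 := lt_trans (by positivity) hW1
  have hεlt : ε < N1 / C := (lt_div_iff₀' hC).mpr hW1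
  have hN2lt : N2 < N1 / C := hW2.trans hεlt
  have hFlt : ∀ x, |F x| < N1 := by
    intro x
    calc |F x| ≤ γ * (N1 + N2) := hF x
      _ ≤ γ * (N1 + N1 / C) := by nlinarith
      _ = γ * (1 + 1 / C) * N1 := by ring
      _ < 1 * N1 := by nlinarith
      _ = N1 := one_mul _
  refine ⟨hFlt, ?_, ?_⟩
  · apply Finset.sup'_le
    intro x _
    have h1 := abs_le_supNorm W1 x
    have h2 := (hFlt x).le
    obtain ⟨ha0, ha1⟩ := hα x
    calc |(1 - α x) * W1 x + α x * F x|
        ≤ |(1 - α x) * W1 x| + |α x * F x| := abs_add_le _ _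
      _ = (1 - α x) * |W1 x| + α x * |F x| := by
          rw [abs_mul, abs_mul, abs_of_nonneg (by linarith : (0:ℝ) ≤ 1 - α x),
            abs_of_nonneg ha0]
      _ ≤ (1 - α x) * N1 + α x * N1 := by nlinarith
      _ = N1 := by ring
  · intro x hx
    have h1 := abs_le_supNorm W1 x
    have h2 := hFlt x
    obtain ⟨ha0, ha1⟩ := hα x
    calc |(1 - α x) * W1 x + α x * F x|
        ≤ |(1 - α x) * W1 x| + |α x * F x| := abs_add_le _ _
      _ = (1 - α x) * |W1 x| + α x * |F x| := by
          rw [abs_mul, abs_mul, abs_of_nonneg (by linarith : (0:ℝ) ≤ 1 - α x),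
            abs_of_nonneg ha0]
      _ < N1 := by nlinarith
end
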